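/- Let X be a Hausdorff topological real vector space, 0 < p < 1, and x ∈ X a nonzero vector. Then the closure of the p-convex hull of {x} equals { t·x : t ∈ [0, 1] }. -/

import Mathlib

open scoped Pointwise

/-- A set `A` is `p`-convex if for all `x y ∈ A` and `s, t ∈ [0,1]` with
`s^p + t^p = 1`, the point `s^(1/p) • x + t^(1/p) • y` belongs to `A`. -/
def PConvex {X : Type*} [AddCommGroup X] [Module ℝ X] (p : ℝ) (A : Set X) : Prop :=
  ∀ x ∈ A, ∀ y ∈ A, ∀ s t : ℝ, s ∈ Set.Icc (0:ℝ) 1 → t ∈ Set.Icc (0:ℝ) 1 →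
    s ^ p + t ^ p = 1 → s ^ (1/p) • x + t ^ (1/p) • y ∈ A


/-- The `p`-convex hull of a set: the smallest `p`-convex set containing it. -/
def pConvexHull {X : Type*} [AddCommGroup X] [Module ℝ X] (p : ℝ) (S : Set X) : Set X :=
  ⋂₀ {B : Set X | PConvex p B ∧ S ⊆ B}

/-!
A `p`-convex set is closed under `y ↦ (s ^ (1/p) + t ^ (1/p)) • y` whenever `s ^ p + t ^ p = 1`.
Writing `s = u ^ (1/p)`, `t = (1 - u) ^ (1/p)`, this factor is `u ^ q + (1 - u) ^ q` with
`q = 1/p² > 1`, which takes every value in `[2 * (1/2) ^ q, 1]`, an interval with left end `< 1`.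
Iterating these contractions starting from `x` reaches every `t • x` with `t ∈ (0, 1]`, so the
closure of the hull contains the segment `[0, x]`. Conversely the segment is `p`-convex, because
`s ^ (1/p) + t ^ (1/p) ≤ s ^ p + t ^ p = 1`, and closed.
-/

open Set

section Hull

variable {X : Type*} [AddCommGroup X] [Module ℝ X]

lemma pConvex_pConvexHull (p : ℝ) (S : Set X) : PConvex p (pConvexHull p S) := by
  intro a ha b hb s t hs ht hst B hB
  exact hB.1 a (ha B hB) b (hb B hB) s t hs ht hst

lemma subset_pConvexHull (p : ℝ) (S : Set X) : S ⊆ pConvexHull p S :=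
  fun _ hz _ hB => hB.2 hz

lemma pConvexHull_min {p : ℝ} {S B : Set X} (hB : PConvex p B) (hSB : S ⊆ B) :
    pConvexHull p S ⊆ B :=
  sInter_subset_of_mem ⟨hB, hSB⟩

end Hull

lemma Real.rpow_one_div_le_rpow {p s : ℝ} (hp : 0 < p) (hp1 : p ≤ 1) (hs : s ∈ Icc (0:ℝ) 1) :
    s ^ (1/p) ≤ s ^ p :=
  Real.rpow_le_rpow_of_exponent_ge' hs.1 hs.2 hp.le (by rw [le_div_iff₀ hp]; nlinarith)

lemma pConvex_Icc_zero_one {p : ℝ} (hp : 0 < p) (hp1 : p ≤ 1) : PConvex p (Icc (0:ℝ) 1) := by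
  rintro a ⟨ha0, ha1⟩ b ⟨hb0, hb1⟩ s t hs ht hst
  have hs' : 0 ≤ s ^ (1/p) := Real.rpow_nonneg hs.1 _
  have ht' : 0 ≤ t ^ (1/p) := Real.rpow_nonneg ht.1 _
  refine ⟨by simp only [smul_eq_mul]; positivity, ?_⟩
  calc s ^ (1/p) • a + t ^ (1/p) • b ≤ s ^ (1/p) + t ^ (1/p) := by
        simp only [smul_eq_mul]; nlinarith
    _ ≤ s ^ p + t ^ p :=
        add_le_add (Real.rpow_one_div_le_rpow hp hp1 hs) (Real.rpow_one_div_le_rpow hp hp1 ht)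
    _ = 1 := hst

lemma PConvex.image_linearMap {E F : Type*} [AddCommGroup E] [Module ℝ E] [AddCommGroup F]
    [Module ℝ F] {p : ℝ} {A : Set E} (hA : PConvex p A) (f : E →ₗ[ℝ] F) : PConvex p (f '' A) := by
  rintro _ ⟨a, ha, rfl⟩ _ ⟨b, hb, rfl⟩ s t hs ht hst
  exact ⟨_, hA a ha b hb s t hs ht hst, by simp only [map_add, map_smul]⟩

lemma two_mul_half_rpow_lt_one {q : ℝ} (hq : 1 < q) : 2 * (1/2 : ℝ) ^ q < 1 := by
  have := Real.rpow_lt_rpow_of_exponent_gt (by norm_num : (0:ℝ) < 1/2) (by norm_num) hq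
  rw [Real.rpow_one] at this
  linarith

lemma Icc_subset_image_rpow_add_one_sub_rpow {q : ℝ} (hq : 0 < q) :
    Icc (2 * (1/2 : ℝ) ^ q) 1 ⊆ (fun u : ℝ => u ^ q + (1 - u) ^ q) '' Icc 0 1 := by
  have hcont : Continuous (fun u : ℝ => u ^ q + (1 - u) ^ q) :=
    (Real.continuous_rpow_const hq.le).add
      ((Real.continuous_rpow_const hq.le).comp (continuous_const.sub continuous_id))
  have hivt := intermediate_value_Icc (by norm_num : (1/2 : ℝ) ≤ 1) hcont.continuousOn
  have hhalf : (1/2 : ℝ) ^ q + (1 - 1/2) ^ q = 2 * (1/2) ^ q := by norm_num; ring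
  simp only [hhalf, sub_self, Real.zero_rpow hq.ne', Real.one_rpow, add_zero] at hivt
  exact hivt.trans (image_mono (Icc_subset_Icc (by norm_num) le_rfl))

lemma Ioc_subset_of_forall_mul_mem {S : Set ℝ} {c : ℝ} (hc0 : 0 < c) (hc1 : c < 1)
    (h1 : 1 ∈ S) (hmul : ∀ a ∈ S, ∀ r ∈ Icc c 1, r * a ∈ S) : Ioc 0 1 ⊆ S := by
  have hpow : ∀ n : ℕ, Icc (c ^ n) 1 ⊆ S := by
    intro n
    induction n with
    | zero => simpa using h1
    | succ n ih =>
      rintro t ⟨ht, ht1⟩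
      by_cases h : c ^ n ≤ t
      · exact ih ⟨h, ht1⟩
      have hcn : 0 < c ^ n := pow_pos hc0 n
      have hr : t / c ^ n ∈ Icc c 1 :=
        ⟨by rw [le_div_iff₀ hcn, ← pow_succ']; exact ht, by rw [div_le_one hcn]; linarith⟩
      have := hmul _ (ih ⟨le_rfl, pow_le_one₀ hc0.le hc1.le⟩) _ hr
      rwa [div_mul_cancel₀ _ hcn.ne'] at this
  rintro t ⟨ht0, ht1⟩
  obtain ⟨n, hn⟩ := exists_pow_lt_of_lt_one ht0 hc1
  exact hpow n ⟨hn.le, ht1⟩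

namespace PConvex

variable {X : Type*} [AddCommGroup X] [Module ℝ X] {p : ℝ} {A : Set X} {y : X}

lemma add_rpow_smul_mem (hA : PConvex p A) (hy : y ∈ A) {s t : ℝ} (hs : s ∈ Icc (0:ℝ) 1)
    (ht : t ∈ Icc (0:ℝ) 1) (hst : s ^ p + t ^ p = 1) : (s ^ (1/p) + t ^ (1/p)) • y ∈ A := by
  simpa only [add_smul] using hA y hy y hy s t hs ht hst

lemma rpow_add_one_sub_rpow_smul_mem (hp : 0 < p) (hA : PConvex p A) (hy : y ∈ A) {u : ℝ}
    (hu : u ∈ Icc (0:ℝ) 1) : (u ^ (1/p * (1/p)) + (1 - u) ^ (1/p * (1/p))) • y ∈ A := by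
  have hu' : 1 - u ∈ Icc (0:ℝ) 1 := ⟨by linarith [hu.2], by linarith [hu.1]⟩
  have hroot : ∀ v ∈ Icc (0:ℝ) 1, v ^ (1/p) ∈ Icc (0:ℝ) 1 ∧ (v ^ (1/p)) ^ p = v :=
    fun v hv => ⟨⟨Real.rpow_nonneg hv.1 _, Real.rpow_le_one hv.1 hv.2 (by positivity)⟩,
      by rw [← Real.rpow_mul hv.1, one_div_mul_cancel hp.ne', Real.rpow_one]⟩
  have := hA.add_rpow_smul_mem hy (hroot u hu).1 (hroot _ hu').1
    (by rw [(hroot u hu).2, (hroot _ hu').2]; ring)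
  rwa [← Real.rpow_mul hu.1, ← Real.rpow_mul hu'.1] at this

lemma smul_mem (hp : 0 < p) (hp1 : p < 1) (hA : PConvex p A) (hy : y ∈ A) {t : ℝ}
    (ht : t ∈ Ioc (0:ℝ) 1) : t • y ∈ A := by
  have hq : 1 < 1/p * (1/p) := by
    rw [div_mul_div_comm, one_mul, lt_div_iff₀ (by positivity)]; nlinarith
  refine Ioc_subset_of_forall_mul_mem (S := {a : ℝ | a • y ∈ A}) (by positivity)
    (two_mul_half_rpow_lt_one hq) (by simpa using hy) ?_ ht
  intro a ha r hr
  obtain ⟨u, hu, rfl⟩ := Icc_subset_image_rpow_add_one_sub_rpow (by linarith) hr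
  simpa only [mem_ofPred_eq, mul_smul] using hA.rpow_add_one_sub_rpow_smul_mem hp ha hu

end PConvex

theorem stmt5_general {X : Type*} [AddCommGroup X] [Module ℝ X] [TopologicalSpace X]
    [ContinuousSMul ℝ X] [T2Space X]
    {p : ℝ} (hp : 0 < p) (hp1 : p < 1) {x : X} :
    closure (pConvexHull p {x}) = {y : X | ∃ t : ℝ, 0 ≤ t ∧ t ≤ 1 ∧ y = t • x} := by
  have hseg : {y : X | ∃ t : ℝ, 0 ≤ t ∧ t ≤ 1 ∧ y = t • x} = (· • x) '' Icc (0:ℝ) 1 := by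
    ext y; simp only [mem_ofPred_eq, mem_image, mem_Icc, and_assoc, eq_comm]
  have hcont : Continuous (· • x : ℝ → X) := continuous_id.smul continuous_const
  have hx : x ∈ pConvexHull p {x} := subset_pConvexHull p {x} rfl
  rw [hseg]
  refine (closure_minimal ?_ (isCompact_Icc.image hcont).isClosed).antisymm ?_
  · exact pConvexHull_min ((pConvex_Icc_zero_one hp hp1.le).image_linearMap
      (LinearMap.toSpanSingleton ℝ X x)) (singleton_subset_iff.2 ⟨1, by simp⟩)
  · rw [← closure_Ioc zero_ne_one]
    refine (image_closure_subset_closure_image hcont).trans (closure_mono ?_)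
    rintro _ ⟨t, ht, rfl⟩
    exact (pConvex_pConvexHull p {x}).smul_mem hp hp1 hx ht

theorem stmt5 {X : Type*} [AddCommGroup X] [Module ℝ X] [TopologicalSpace X]
    [IsTopologicalAddGroup X] [ContinuousSMul ℝ X] [T2Space X]
    {p : ℝ} (hp : 0 < p) (hp1 : p < 1) {x : X} (hx : x ≠ 0) :
    closure (pConvexHull p {x}) = {y : X | ∃ t : ℝ, 0 ≤ t ∧ t ≤ 1 ∧ y = t • x} :=
  stmt5_general hp hp1
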